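/- Suppose for a connected weighted graph G=(V,w,m) with heat semigroup P_t and K > 0, n ∈ (0,∞), the inequality Γ(P_t f) ≤ e^{-2Kt} P_t(Γf) − ((1−e^{-2Kt})/(Kn))·(Δ P_t f)² holds pointwise for all bounded f with bounded Γf and all t > 0. Then the resistance diameter satisfies diam_ρ(G) ≤ π√(n/K). -/

import Mathlib

open scoped ENNReal

structure WGraph (V : Type*) where
  w : V → V → ℝ
  m : V → ℝ
  symm : ∀ x y, w x y = w y x
  nonneg : ∀ x y, 0 ≤ w x y
  loopless : ∀ x, w x x = 0
  mpos : ∀ x, 0 < m x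
  locfin : ∀ x, {y | w x y ≠ 0}.Finite

variable {V : Type*}

noncomputable def WGraph.lap (G : WGraph V) (f : V → ℝ) (x : V) : ℝ :=
  (1 / G.m x) * ∑' y, G.w x y * (f y - f x)

noncomputable def WGraph.gamma (G : WGraph V) (f g : V → ℝ) (x : V) : ℝ :=
  (G.lap (f * g) x - f x * G.lap g x - g x * G.lap f x) / 2

noncomputable def WGraph.gamma2 (G : WGraph V) (f : V → ℝ) (x : V) : ℝ :=
  (G.lap (G.gamma f f) x - 2 * G.gamma f (G.lap f) x) / 2

noncomputable def WGraph.deg (G : WGraph V) (x : V) : ℝ :=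
  (∑' y, G.w x y) / G.m x

noncomputable def WGraph.cdist (G : WGraph V) (x y : V) : ℕ∞ :=
  ⨅ (n : ℕ) (_ : ∃ c : ℕ → V, c 0 = x ∧ c n = y ∧ ∀ i < n, 0 < G.w (c i) (c (i+1))), (n : ℕ∞)

noncomputable def WGraph.rho (G : WGraph V) (x y : V) : ℝ≥0∞ :=
  ⨆ (f : V → ℝ) (_ : ∀ z, G.gamma f f z ≤ 1), ENNReal.ofReal (f y - f x)

noncomputable def WGraph.diamd (G : WGraph V) : ℝ≥0∞ := ⨆ x, ⨆ y, (G.cdist x y : ℝ≥0∞)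

noncomputable def WGraph.diamrho (G : WGraph V) : ℝ≥0∞ := ⨆ x, ⨆ y, G.rho x y

def WGraph.Connected (G : WGraph V) : Prop :=
  ∀ x y, ∃ (n : ℕ) (c : ℕ → V), c 0 = x ∧ c n = y ∧ ∀ i < n, 0 < G.w (c i) (c (i+1))

/-- An abstract heat semigroup for the graph Laplacian: initial condition,
pointwise derivative given by the Laplacian (for bounded functions),
and the Markov properties (monotone bounds and positivity preservation). -/
structure IsHeatSemigroup (G : WGraph V) (P : ℝ → (V → ℝ) → V → ℝ) : Prop where
  init : ∀ f, P 0 f = f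
  deriv : ∀ (f : V → ℝ), (∃ C, ∀ x, |f x| ≤ C) →
    ∀ (t : ℝ) (x : V), HasDerivAt (fun s => P s f x) (G.lap (P t f) x) t
  mono : ∀ (g : V → ℝ) (c : ℝ), (∀ y, g y ≤ c) → ∀ t, 0 ≤ t → ∀ x, P t g x ≤ c
  pos : ∀ (g : V → ℝ), (∀ y, 0 ≤ g y) → ∀ t, 0 ≤ t → ∀ x, 0 ≤ P t g x

/-!
Under CD(K,n) with `Γ f ≤ 1`, the semigroup inequality at time `t` gives `Γ(P_t f) ≤ e^{-2Kt}`
(as `P_t (Γ f) ≤ 1` and the last term is nonpositive) and, since `Γ(P_t f) ≥ 0`, also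
`|Δ P_t f| ≤ √(n/K) · K e^{-Kt} / √(1 - e^{-2Kt})`, which is the derivative of
`√(n/K) · arccos (e^{-Kt})`. Integrating in time, `P_t f` stays within `√(n/K) · π/2` of `f`
at every vertex, while `Γ(P_t f) → 0` forces `P_t f` to become constant along every path of the
connected graph. Hence `f y - f x ≤ π √(n/K)`. Functions with `Γ f ≤ 1` may be taken bounded,
since clamping `f` to `[f x, f y]` does not increase `Γ f`.
-/

open Real Set Filter Topology

namespace WGraph

variable (G : WGraph V)

theorem summable_w_mul (x : V) (F : V → ℝ) : Summable fun y => G.w x y * F y :=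
  summable_of_ne_finset_zero (s := (G.locfin x).toFinset) fun y hy => by
    rw [not_not.1 (mt (G.locfin x).mem_toFinset.2 hy), zero_mul]

theorem gamma_self_eq (f : V → ℝ) (x : V) :
    G.gamma f f x = 1 / (2 * G.m x) * ∑' y, G.w x y * (f y - f x) ^ 2 := by
  have hm := G.mpos x
  have hsum : ∑' y, G.w x y * (f y - f x) ^ 2
      = ∑' y, G.w x y * (f y * f y - f x * f x) - 2 * f x * ∑' y, G.w x y * (f y - f x) := by
    rw [← tsum_mul_left, ← (G.summable_w_mul x _).tsum_sub ((G.summable_w_mul x _).mul_left _)]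
    congr 1 with y
    ring
  simp only [gamma, lap, Pi.mul_apply, hsum]
  field_simp
  ring

theorem gamma_self_nonneg (f : V → ℝ) (x : V) : 0 ≤ G.gamma f f x := by
  have hm := G.mpos x
  rw [gamma_self_eq]
  exact mul_nonneg (by positivity) (tsum_nonneg fun y => mul_nonneg (G.nonneg x y) (sq_nonneg _))

theorem w_mul_sq_sub_le_gamma (f : V → ℝ) (x y : V) :
    G.w x y * (f y - f x) ^ 2 ≤ 2 * G.m x * G.gamma f f x := by
  have hm := G.mpos x
  rw [gamma_self_eq, ← mul_assoc, mul_one_div_cancel (by positivity), one_mul]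
  exact (G.summable_w_mul x fun z => (f z - f x) ^ 2).le_tsum y
    fun z _ => mul_nonneg (G.nonneg x z) (sq_nonneg _)

theorem gamma_self_le_of_abs_sub_le {f g : V → ℝ} (h : ∀ u v, |g u - g v| ≤ |f u - f v|)
    (x : V) : G.gamma g g x ≤ G.gamma f f x := by
  have hm := G.mpos x
  rw [gamma_self_eq, gamma_self_eq]
  refine mul_le_mul_of_nonneg_left ?_ (by positivity)
  exact (G.summable_w_mul x _).tsum_le_tsum
    (fun y => mul_le_mul_of_nonneg_left (sq_le_sq.2 (h y x)) (G.nonneg x y))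
    (G.summable_w_mul x _)

theorem tendsto_sub_of_tendsto_gamma {ι : Type*} {l : Filter ι} {F : ι → V → ℝ} {x y : V}
    (hF : Tendsto (fun i => G.gamma (F i) (F i) x) l (𝓝 0)) (hxy : 0 < G.w x y) :
    Tendsto (fun i => F i y - F i x) l (𝓝 0) := by
  have hbound : Tendsto (fun i => √(2 * G.m x / G.w x y * G.gamma (F i) (F i) x)) l (𝓝 0) := by
    simpa using (hF.const_mul (2 * G.m x / G.w x y)).sqrt
  refine squeeze_zero_norm (fun i => ?_) hbound
  rw [Real.norm_eq_abs]
  apply Real.abs_le_sqrt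
  rw [div_mul_eq_mul_div, le_div_iff₀ hxy, mul_comm]
  exact G.w_mul_sq_sub_le_gamma (F i) x y

theorem tendsto_sub_of_connected {ι : Type*} {l : Filter ι} {F : ι → V → ℝ}
    (hconn : G.Connected) (hF : ∀ x, Tendsto (fun i => G.gamma (F i) (F i) x) l (𝓝 0))
    (x y : V) : Tendsto (fun i => F i y - F i x) l (𝓝 0) := by
  obtain ⟨N, c, rfl, rfl, hc⟩ := hconn x y
  have hsum := tendsto_finsetSum (Finset.range N) fun j hj =>
    G.tendsto_sub_of_tendsto_gamma (hF (c j)) (hc j (Finset.mem_range.1 hj))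
  rw [Finset.sum_const_zero] at hsum
  exact hsum.congr fun i => Finset.sum_range_sub (fun j => F i (c j)) N

end WGraph

theorem abs_sub_le_sub_of_abs_deriv_le {g g' ψ ψ' : ℝ → ℝ} {a b : ℝ} (hab : a ≤ b)
    (hg : ContinuousOn g (Icc a b)) (hψ : ContinuousOn ψ (Icc a b))
    (hg' : ∀ t ∈ Ioo a b, HasDerivAt g (g' t) t) (hψ' : ∀ t ∈ Ioo a b, HasDerivAt ψ (ψ' t) t)
    (hle : ∀ t ∈ Ioo a b, |g' t| ≤ ψ' t) : |g b - g a| ≤ ψ b - ψ a := by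
  have key : ∀ s : ℝ, |s| = 1 → s * (g b - g a) ≤ ψ b - ψ a := by
    intro s hs
    have hmono : MonotoneOn (fun t => ψ t - s * g t) (Icc a b) := by
      refine monotoneOn_of_hasDerivWithinAt_nonneg (f' := fun t => ψ' t - s * g' t)
        (convex_Icc a b) (hψ.sub (hg.const_smul s)) (fun t ht => ?_) (fun t ht => ?_)
      · rw [interior_Icc] at ht
        exact ((hψ' t ht).sub ((hg' t ht).const_mul s)).hasDerivWithinAt
      · rw [interior_Icc] at ht
        have : s * g' t ≤ |g' t| := by simpa [abs_mul, hs] using le_abs_self (s * g' t)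
        linarith [hle t ht]
    have := hmono (left_mem_Icc.2 hab) (right_mem_Icc.2 hab) hab
    simp only at this
    linarith
  rw [abs_le]
  constructor <;> linarith [key 1 (by simp), key (-1) (by simp)]

theorem hasDerivAt_arccos_exp_neg_mul {K t : ℝ} (hK : 0 < K) (ht : 0 < t) :
    HasDerivAt (fun s => arccos (exp (-(K * s))))
      (K * exp (-(K * t)) / √(1 - exp (-(K * t)) ^ 2)) t := by
  have hlt : exp (-(K * t)) < 1 := exp_lt_one_iff.2 (by nlinarith)
  have hexp : HasDerivAt (fun s => exp (-(K * s))) (exp (-(K * t)) * -K) t := by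
    simpa using ((hasDerivAt_id t).const_mul K).neg.exp
  refine ((hasDerivAt_arccos (by linarith [exp_pos (-(K * t))]) hlt.ne).comp t hexp).congr_deriv ?_
  ring

theorem abs_sub_le_of_abs_deriv_le_arccos {g g' : ℝ → ℝ} {K c T : ℝ} (hK : 0 < K) (hc : 0 ≤ c)
    (hT : 0 ≤ T) (hg : ∀ t, HasDerivAt g (g' t) t)
    (hle : ∀ t, 0 < t → |g' t| ≤ c * (K * exp (-(K * t)) / √(1 - exp (-(K * t)) ^ 2))) :
    |g T - g 0| ≤ c * (π / 2) := by
  have hψ : Continuous fun s => c * arccos (exp (-(K * s))) := by fun_prop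
  calc |g T - g 0| ≤ c * arccos (exp (-(K * T))) - c * arccos (exp (-(K * 0))) :=
        abs_sub_le_sub_of_abs_deriv_le hT
          (continuous_iff_continuousAt.2 fun t => (hg t).continuousAt).continuousOn hψ.continuousOn (fun t _ => hg t)
          (fun t ht => (hasDerivAt_arccos_exp_neg_mul hK ht.1).const_mul c)
          (fun t ht => hle t ht.1)
    _ ≤ c * (π / 2) := by
        rw [mul_zero, neg_zero, exp_zero, arccos_one, mul_zero, sub_zero]
        exact mul_le_mul_of_nonneg_left (arccos_le_pi_div_two.2 (exp_pos _).le) hc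

namespace WGraph

def SemigroupCD (G : WGraph V) (P : ℝ → (V → ℝ) → V → ℝ) (K n : ℝ) : Prop :=
  ∀ (f : V → ℝ), (∃ C, ∀ x, |f x| ≤ C) → (∃ C, ∀ x, |G.gamma f f x| ≤ C) →
    ∀ t, 0 < t → ∀ x,
      G.gamma (P t f) (P t f) x ≤ Real.exp (-(2 * K * t)) * P t (G.gamma f f) x
        - ((1 - Real.exp (-(2 * K * t))) / (K * n)) * (G.lap (P t f) x) ^ 2

namespace SemigroupCD

variable {G : WGraph V} {P : ℝ → (V → ℝ) → V → ℝ} {K n : ℝ} {f : V → ℝ}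

theorem gamma_heat_le (hCD : G.SemigroupCD P K n) (hP : IsHeatSemigroup G P)
    (hf_bdd : ∃ C, ∀ x, |f x| ≤ C) (hf : ∀ x, G.gamma f f x ≤ 1) {t : ℝ} (ht : 0 < t) (x : V) :
    G.gamma (P t f) (P t f) x
      ≤ exp (-(2 * K * t)) - (1 - exp (-(2 * K * t))) / (K * n) * (G.lap (P t f) x) ^ 2 := by
  have hΓ_bdd : ∃ C, ∀ x, |G.gamma f f x| ≤ C :=
    ⟨1, fun x => abs_le.2 ⟨by linarith [G.gamma_self_nonneg f x], hf x⟩⟩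
  refine (hCD f hf_bdd hΓ_bdd t ht x).trans (sub_le_sub_right ?_ _)
  exact mul_le_of_le_one_right (exp_pos _).le (hP.mono _ 1 hf t ht.le x)

theorem gamma_heat_le_exp (hCD : G.SemigroupCD P K n) (hP : IsHeatSemigroup G P)
    (hK : 0 < K) (hn : 0 < n) (hf_bdd : ∃ C, ∀ x, |f x| ≤ C) (hf : ∀ x, G.gamma f f x ≤ 1)
    {t : ℝ} (ht : 0 < t) (x : V) : G.gamma (P t f) (P t f) x ≤ exp (-(2 * K * t)) := by
  have hE : exp (-(2 * K * t)) ≤ 1 := exp_le_one_iff.2 (by nlinarith)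
  have hcoef : 0 ≤ (1 - exp (-(2 * K * t))) / (K * n) := by
    apply div_nonneg <;> nlinarith
  nlinarith [hCD.gamma_heat_le hP hf_bdd hf ht x, mul_nonneg hcoef (sq_nonneg (G.lap (P t f) x))]

theorem abs_lap_heat_le (hCD : G.SemigroupCD P K n) (hP : IsHeatSemigroup G P)
    (hK : 0 < K) (hn : 0 < n) (hf_bdd : ∃ C, ∀ x, |f x| ≤ C) (hf : ∀ x, G.gamma f f x ≤ 1)
    {t : ℝ} (ht : 0 < t) (x : V) :
    |G.lap (P t f) x| ≤ √(n / K) * (K * exp (-(K * t)) / √(1 - exp (-(K * t)) ^ 2)) := by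
  set u := exp (-(K * t))
  have hu2 : exp (-(2 * K * t)) = u ^ 2 := by rw [← exp_nat_mul]; ring_nf
  have hu1 : u ^ 2 < 1 := by rw [← hu2]; exact exp_lt_one_iff.2 (by nlinarith)
  have hsq : (G.lap (P t f) x) ^ 2 * (1 - u ^ 2) ≤ K * n * u ^ 2 := by
    have h := (G.gamma_self_nonneg (P t f) x).trans (hCD.gamma_heat_le hP hf_bdd hf ht x)
    rw [hu2, sub_nonneg, div_mul_eq_mul_div, div_le_iff₀ (by positivity)] at h
    linarith
  apply abs_le_of_sq_le_sq _ (by positivity)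
  have hKn : n / K * (K ^ 2 * u ^ 2 / (1 - u ^ 2)) = K * n * u ^ 2 / (1 - u ^ 2) := by
    field_simp
  rw [mul_pow, div_pow, mul_pow, sq_sqrt (by positivity), sq_sqrt (by linarith), hKn,
    le_div_iff₀ (by linarith)]
  exact hsq

theorem abs_heat_sub_le (hCD : G.SemigroupCD P K n) (hP : IsHeatSemigroup G P)
    (hK : 0 < K) (hn : 0 < n) (hf_bdd : ∃ C, ∀ x, |f x| ≤ C) (hf : ∀ x, G.gamma f f x ≤ 1)
    {T : ℝ} (hT : 0 ≤ T) (x : V) : |P T f x - f x| ≤ √(n / K) * (π / 2) := by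
  have h := abs_sub_le_of_abs_deriv_le_arccos hK (sqrt_nonneg _) hT
    (fun t => hP.deriv f hf_bdd t x) (fun t ht => hCD.abs_lap_heat_le hP hK hn hf_bdd hf ht x)
  rwa [hP.init] at h

theorem tendsto_gamma_heat (hCD : G.SemigroupCD P K n) (hP : IsHeatSemigroup G P)
    (hK : 0 < K) (hn : 0 < n) (hf_bdd : ∃ C, ∀ x, |f x| ≤ C) (hf : ∀ x, G.gamma f f x ≤ 1)
    (x : V) : Tendsto (fun t => G.gamma (P t f) (P t f) x) atTop (𝓝 0) := by
  refine squeeze_zero' (Eventually.of_forall fun t => G.gamma_self_nonneg _ x) ?_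
    (tendsto_exp_neg_atTop_nhds_zero.comp (tendsto_id.const_mul_atTop (by positivity : 0 < 2 * K)))
  filter_upwards [eventually_gt_atTop 0] with t ht
  exact hCD.gamma_heat_le_exp hP hK hn hf_bdd hf ht x

theorem sub_le_pi_mul_sqrt (hCD : G.SemigroupCD P K n) (hP : IsHeatSemigroup G P)
    (hconn : G.Connected) (hK : 0 < K) (hn : 0 < n) (hf_bdd : ∃ C, ∀ x, |f x| ≤ C)
    (hf : ∀ x, G.gamma f f x ≤ 1) (x y : V) : f y - f x ≤ π * √(n / K) := by
  have hlim := G.tendsto_sub_of_connected hconn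
    (fun z => hCD.tendsto_gamma_heat hP hK hn hf_bdd hf z) x y
  have hclose : ∀ᶠ t in atTop, f y - f x - π * √(n / K) ≤ P t f y - P t f x := by
    filter_upwards [eventually_ge_atTop 0] with t ht
    have hy := abs_le.1 (hCD.abs_heat_sub_le hP hK hn hf_bdd hf ht y)
    have hx := abs_le.1 (hCD.abs_heat_sub_le hP hK hn hf_bdd hf ht x)
    linarith [hy.1, hx.2]
  linarith [ge_of_tendsto hlim hclose]

end SemigroupCD

end WGraph

theorem WGraph.rho_le_of_forall_bounded (G : WGraph V) {x y : V} {B : ℝ}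
    (h : ∀ g : V → ℝ, (∃ C, ∀ z, |g z| ≤ C) → (∀ z, G.gamma g g z ≤ 1) → g y - g x ≤ B) :
    G.rho x y ≤ ENNReal.ofReal B := by
  refine iSup₂_le fun f hf => ?_
  rcases le_or_gt (f x) (f y) with hxy | hyx
  · set g : V → ℝ := fun z => projIcc (f x) (f y) hxy (f z)
    have hg_bdd : ∃ C, ∀ z, |g z| ≤ C := ⟨max |f x| |f y|, fun z =>
      abs_le_max_abs_abs (projIcc (f x) (f y) hxy (f z)).2.1 (projIcc (f x) (f y) hxy (f z)).2.2⟩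
    have hg : ∀ z, G.gamma g g z ≤ 1 := fun z =>
      (G.gamma_self_le_of_abs_sub_le (fun u v => abs_projIcc_sub_projIcc hxy) z).trans (hf z)
    have hgB := h g hg_bdd hg
    simp only [g, projIcc_left, projIcc_right] at hgB
    exact ENNReal.ofReal_le_ofReal hgB
  · rw [ENNReal.ofReal_of_nonpos (by linarith)]
    exact zero_le

/-- the CD(K,n) semigroup inequality (for bounded f with bounded Γf)
implies diam_ρ ≤ π√(n/K). -/
theorem diamrho_le_of_CDn_semigroup (G : WGraph V) (hconn : G.Connected)
    (K n : ℝ) (hK : 0 < K) (hn : 0 < n)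
    (P : ℝ → (V → ℝ) → V → ℝ) (hP : IsHeatSemigroup G P)
    (hCDn : ∀ (f : V → ℝ), (∃ C, ∀ x, |f x| ≤ C) → (∃ C, ∀ x, |G.gamma f f x| ≤ C) →
      ∀ t, 0 < t → ∀ x,
        G.gamma (P t f) (P t f) x ≤ Real.exp (-(2 * K * t)) * P t (G.gamma f f) x
          - ((1 - Real.exp (-(2 * K * t))) / (K * n)) * (G.lap (P t f) x) ^ 2) :
    G.diamrho ≤ ENNReal.ofReal (Real.pi * Real.sqrt (n / K)) :=
  iSup₂_le fun x y => G.rho_le_of_forall_bounded fun _ hf_bdd hf =>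
    WGraph.SemigroupCD.sub_le_pi_mul_sqrt hCDn hP hconn hK hn hf_bdd hf x y
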